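/- In the setting of the finite-horizon Markov decision process with bounded measurable costs, suppose for each n there is a measurable function a_n*: R^d → A attaining the infimum in the dynamic programming recursion: V_n(x) = f(x, a_n*(x)) + E[ V_{n+1}(F(x, a_n*(x), ε_1)) ] for all x. Then the feedback control α* defined by α*_n = a_n*(X*_n), where X*_{n+1} = F(X*_n, a_n*(X*_n), ε_{n+1}) and X*_0 = x_0, satisfies J(α*) = V_0(x_0); in particular α* is optimal. -/

import Mathlib

/-!
Under the feedback maps `a_n*`, the attained DP equation evaluated along the optimally controlled
state reads `V_n(X*_n) = f(X*_n, a_n*(X*_n)) + ∫ V_{n+1}(F(X*_n, a_n*(X*_n), e)) dν(e)`. Since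
`X*_n` is a function of `ε_1, …, ε_n` only, it is independent of `ε_{n+1} ∼ ν`, so taking
expectations turns the inner integral into `E[V_{n+1}(X*_{n+1})]`. Hence
`E[V_n(X*_n)] = E[f(X*_n, α*_n)] + E[V_{n+1}(X*_{n+1})]`, and telescoping from `n = 0`, where
`X*_0 = x_0`, to `n = N`, where `V_N = g`, gives `J(α*) = V_0(x_0)`.
-/

open MeasureTheory ProbabilityTheory

section BoundedIntegrals

variable {α β : Type*} [MeasurableSpace α] [MeasurableSpace β]

theorem integrable_of_abs_le {μ : Measure α} [IsFiniteMeasure μ] {h : α → ℝ}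
    (hm : Measurable h) {C : ℝ} (hC : ∀ x, |h x| ≤ C) : Integrable h μ :=
  .of_bound hm.aestronglyMeasurable C (.of_forall fun x => (Real.norm_eq_abs _).trans_le (hC x))

theorem abs_integral_le_of_abs_le (ν : Measure β) [IsProbabilityMeasure ν] {h : β → ℝ} {C : ℝ}
    (hC : ∀ y, |h y| ≤ C) : |∫ y, h y ∂ν| ≤ C := by
  simpa using norm_integral_le_of_norm_le_const (μ := ν)
    (.of_forall fun y => (Real.norm_eq_abs _).trans_le (hC y))

theorem measurable_parametric_integral (H : α → β → ℝ)
    (hH : Measurable fun p : α × β => H p.1 p.2) (ν : Measure β) [SFinite ν] :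
    Measurable fun x => ∫ y, H x y ∂ν :=
  (hH.stronglyMeasurable.integral_prod_right' (ν := ν)).measurable

theorem ProbabilityTheory.IndepFun.integral_comp_eq_integral_integral {Ω : Type*}
    [MeasurableSpace Ω] {μ : Measure Ω} [IsProbabilityMeasure μ] {ν : Measure β}
    [IsProbabilityMeasure ν] {Y : Ω → α} {Z : Ω → β} (hY : Measurable Y) (hZ : Measurable Z)
    (hind : IndepFun Y Z μ) (hZν : μ.map Z = ν) {H : α → β → ℝ}
    (hH : Measurable fun p : α × β => H p.1 p.2) {C : ℝ} (hC : ∀ x y, |H x y| ≤ C) :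
    ∫ ω, H (Y ω) (Z ω) ∂μ = ∫ ω, ∫ y, H (Y ω) y ∂ν ∂μ := by
  have : IsProbabilityMeasure (μ.map Y) := Measure.isProbabilityMeasure_map hY.aemeasurable
  have hjoint : μ.map (fun ω => (Y ω, Z ω)) = (μ.map Y).prod ν :=
    hZν ▸ (indepFun_iff_map_prod_eq_prod_map_map hY.aemeasurable hZ.aemeasurable).mp hind
  calc ∫ ω, H (Y ω) (Z ω) ∂μ
      = ∫ p, H p.1 p.2 ∂((μ.map Y).prod ν) := by
        rw [← hjoint, integral_map (hY.prodMk hZ).aemeasurable hH.aestronglyMeasurable]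
    _ = ∫ x, ∫ y, H x y ∂ν ∂(μ.map Y) :=
        integral_prod _ (integrable_of_abs_le hH fun p => hC p.1 p.2)
    _ = ∫ ω, ∫ y, H (Y ω) y ∂ν ∂μ :=
        integral_map hY.aemeasurable
          (measurable_parametric_integral H hH ν).aestronglyMeasurable

end BoundedIntegrals

section NoiseDriven

variable {Ω β : Type*} [mβ : MeasurableSpace β]

theorem ProbabilityTheory.iIndepFun.indepFun_of_measurable_iSup_comap {γ : Type*}
    [MeasurableSpace Ω] [MeasurableSpace γ] {μ : Measure Ω}
    {ε : ℕ → Ω → β} (hε : ∀ n, Measurable (ε n)) (hind : iIndepFun ε μ) {n j : ℕ} (hnj : n < j)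
    {Y : Ω → γ} (hY : Measurable[⨆ k ≤ n, mβ.comap (ε k)] Y) : IndepFun Y (ε j) μ := by
  have hpast_future := indep_iSup_of_disjoint (fun k => (hε k).comap_le) hind.iIndep
    (S := Set.Iic n) (T := {j}) (Set.disjoint_singleton_right.mpr (by simpa using hnj))
  rw [iSup_singleton] at hpast_future
  rw [IndepFun_iff_Indep]
  exact indep_of_indep_of_le_left hpast_future hY.comap_le

theorem measurable_iSup_comap_of_recursion {S : Type*} [MeasurableSpace S] {ε : ℕ → Ω → β}
    {G : ℕ → S → β → S} (hG : ∀ n, Measurable fun p : S × β => G n p.1 p.2) {X : ℕ → Ω → S}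
    {x₀ : S} (hX₀ : ∀ ω, X 0 ω = x₀) (hX : ∀ n ω, X (n + 1) ω = G n (X n ω) (ε (n + 1) ω))
    (n : ℕ) : Measurable[⨆ k ≤ n, mβ.comap (ε k)] (X n) := by
  induction n with
  | zero =>
    rw [funext hX₀]
    exact measurable_const
  | succ n ih =>
    have hmono : (⨆ k ≤ n, mβ.comap (ε k)) ≤ ⨆ k ≤ n + 1, mβ.comap (ε k) :=
      biSup_mono fun k hk => hk.trans n.le_succ
    have hε : Measurable[⨆ k ≤ n + 1, mβ.comap (ε k)] (ε (n + 1)) :=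
      (comap_measurable (ε (n + 1))).mono (le_iSup₂ (f := fun k _ => mβ.comap (ε k)) _ le_rfl)
        le_rfl
    rw [funext (hX n)]
    exact (hG n).comp ((ih.mono hmono le_rfl).prodMk hε)

end NoiseDriven

section DynamicProgramming

variable {S A β : Type*} [MeasurableSpace S] [MeasurableSpace A] [MeasurableSpace β]
  {F : S → A → β → S} {f : S → A → ℝ} {a : S → A}

theorem measurable_closedLoop (hF : Measurable fun q : S × A × β => F q.1 q.2.1 q.2.2)
    (ha : Measurable a) : Measurable fun p : S × β => F p.1 (a p.1) p.2 :=
  hF.comp (measurable_fst.prodMk ((ha.comp measurable_fst).prodMk measurable_snd))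

theorem measurable_and_abs_le_of_bellman (ν : Measure β) [IsProbabilityMeasure ν]
    (hF : Measurable fun q : S × A × β => F q.1 q.2.1 q.2.2) (ha : Measurable a)
    (hf : Measurable fun q : S × A => f q.1 q.2) {Mf : ℝ} (hfb : ∀ x a, |f x a| ≤ Mf)
    {h h' : S → ℝ} (hh : Measurable h) {C : ℝ} (hC : ∀ x, |h x| ≤ C)
    (hh' : ∀ x, h' x = f x (a x) + ∫ e, h (F x (a x) e) ∂ν) :
    Measurable h' ∧ ∀ x, |h' x| ≤ Mf + C := by
  rw [funext hh']
  refine ⟨(hf.comp (measurable_id.prodMk ha)).add ?_, fun x => ?_⟩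
  · exact measurable_parametric_integral (fun x e => h (F x (a x) e))
      (hh.comp (measurable_closedLoop hF ha)) ν
  · exact (abs_add_le _ _).trans (add_le_add (hfb _ _) (abs_integral_le_of_abs_le ν fun _ => hC _))

theorem measurable_and_bounded_of_bellman_attained (ν : Measure β) [IsProbabilityMeasure ν]
    (hF : Measurable fun q : S × A × β => F q.1 q.2.1 q.2.2)
    (hf : Measurable fun q : S × A => f q.1 q.2) {Mf : ℝ} (hfb : ∀ x a, |f x a| ≤ Mf)
    {g : S → ℝ} (hg : Measurable g) {Mg : ℝ} (hgb : ∀ x, |g x| ≤ Mg)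
    {N : ℕ} {V : ℕ → S → ℝ} (hVN : ∀ x, V N x = g x) {astar : ℕ → S → A}
    (hastar : ∀ n, Measurable (astar n))
    (hattain : ∀ n < N, ∀ x, V n x = f x (astar n x) + ∫ e, V (n + 1) (F x (astar n x) e) ∂ν)
    {n : ℕ} (hn : n ≤ N) : Measurable (V n) ∧ ∃ C, ∀ x, |V n x| ≤ C := by
  induction hn using Nat.decreasingInduction with
  | self => exact ⟨funext hVN ▸ hg, Mg, fun x => hVN x ▸ hgb x⟩
  | of_succ k hk ih =>
    obtain ⟨hm, C, hC⟩ := ih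
    obtain ⟨hm', hC'⟩ :=
      measurable_and_abs_le_of_bellman ν hF (hastar k) hf hfb hm hC (hattain k hk)
    exact ⟨hm', _, hC'⟩

theorem integral_comp_eq_of_bellman {Ω : Type*} [MeasurableSpace Ω] {μ : Measure Ω}
    [IsProbabilityMeasure μ] {ν : Measure β} [IsProbabilityMeasure ν]
    (hF : Measurable fun q : S × A × β => F q.1 q.2.1 q.2.2) (ha : Measurable a)
    (hf : Measurable fun q : S × A => f q.1 q.2) {Mf : ℝ} (hfb : ∀ x a, |f x a| ≤ Mf)
    {h h' : S → ℝ} (hh : Measurable h) {C : ℝ} (hC : ∀ x, |h x| ≤ C)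
    (hh' : ∀ x, h' x = f x (a x) + ∫ e, h (F x (a x) e) ∂ν)
    {Y : Ω → S} {Z : Ω → β} (hY : Measurable Y) (hZ : Measurable Z) (hind : IndepFun Y Z μ)
    (hZν : μ.map Z = ν) :
    ∫ ω, h' (Y ω) ∂μ = ∫ ω, f (Y ω) (a (Y ω)) ∂μ + ∫ ω, h (F (Y ω) (a (Y ω)) (Z ω)) ∂μ := by
  have hH : Measurable fun p : S × β => h (F p.1 (a p.1) p.2) :=
    hh.comp (measurable_closedLoop hF ha)
  rw [hind.integral_comp_eq_integral_integral hY hZ hZν (H := fun x e => h (F x (a x) e)) hH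
    fun _ _ => hC _]
  simp_rw [hh']
  refine integral_add ?_ ?_
  · exact integrable_of_abs_le (hf.comp (hY.prodMk (ha.comp hY))) fun _ => hfb _ _
  · exact integrable_of_abs_le
      ((measurable_parametric_integral (fun x e => h (F x (a x) e)) hH ν).comp hY)
      fun _ => abs_integral_le_of_abs_le ν fun _ => hC _

end DynamicProgramming

theorem stmt_3_general {Ω Enoise : Type*} [MeasurableSpace Ω] [MeasurableSpace Enoise]
    (μ : Measure Ω) [IsProbabilityMeasure μ]
    (d : ℕ) (A : Type*) [MeasurableSpace A]
    (ε : ℕ → Ω → Enoise) (hεmeas : ∀ n, Measurable (ε n))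
    (ν : Measure Enoise) [IsProbabilityMeasure ν]
    (hident : ∀ n, μ.map (ε n) = ν)
    (hindep : ProbabilityTheory.iIndepFun ε μ)
    (F : EuclideanSpace ℝ (Fin d) → A → Enoise → EuclideanSpace ℝ (Fin d))
    (hFmeas : Measurable fun q : (EuclideanSpace ℝ (Fin d)) × A × Enoise => F q.1 q.2.1 q.2.2)
    (f : EuclideanSpace ℝ (Fin d) → A → ℝ) (g : EuclideanSpace ℝ (Fin d) → ℝ)
    (hfmeas : Measurable fun q : (EuclideanSpace ℝ (Fin d)) × A => f q.1 q.2)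
    (hgmeas : Measurable g)
    (Mf Mg : ℝ) (hfbdd : ∀ x a, |f x a| ≤ Mf) (hgbdd : ∀ x, |g x| ≤ Mg)
    (N : ℕ) (V : ℕ → EuclideanSpace ℝ (Fin d) → ℝ)
    (hVN : ∀ x, V N x = g x)
    (astar : ℕ → EuclideanSpace ℝ (Fin d) → A)
    (hastarmeas : ∀ n, Measurable (astar n))
    (hattain : ∀ n < N, ∀ x,
      V n x = f x (astar n x) + ∫ e, V (n + 1) (F x (astar n x) e) ∂ν)
    (x0 : EuclideanSpace ℝ (Fin d))
    (Xstar : ℕ → Ω → EuclideanSpace ℝ (Fin d))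
    (hX0 : ∀ ω, Xstar 0 ω = x0)
    (hXs : ∀ n ω, Xstar (n + 1) ω = F (Xstar n ω) (astar n (Xstar n ω)) (ε (n + 1) ω)) :
    (∫ ω, (∑ n ∈ Finset.range N, f (Xstar n ω) (astar n (Xstar n ω))) + g (Xstar N ω) ∂μ)
      = V 0 x0 := by
  have hXpast n := measurable_iSup_comap_of_recursion (G := fun n x e => F x (astar n x) e)
    (fun n => measurable_closedLoop hFmeas (hastarmeas n)) hX0 hXs n
  have hXmeas n : Measurable (Xstar n) :=
    (hXpast n).mono (iSup₂_le fun k _ => (hεmeas k).comap_le) le_rfl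
  have hcost n : Integrable (fun ω => f (Xstar n ω) (astar n (Xstar n ω))) μ :=
    integrable_of_abs_le (hfmeas.comp ((hXmeas n).prodMk ((hastarmeas n).comp (hXmeas n))))
      fun _ => hfbdd _ _
  have hVbdd n (hn : n ≤ N) := measurable_and_bounded_of_bellman_attained ν hFmeas hfmeas hfbdd
    hgmeas hgbdd hVN hastarmeas hattain hn
  set u : ℕ → ℝ := fun n => ∫ ω, V n (Xstar n ω) ∂μ
  have hstep : ∀ n < N, ∫ ω, f (Xstar n ω) (astar n (Xstar n ω)) ∂μ = u n - u (n + 1) := by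
    intro n hn
    obtain ⟨hm, C, hC⟩ := hVbdd (n + 1) hn
    have := integral_comp_eq_of_bellman hFmeas (hastarmeas n) hfmeas hfbdd hm hC (hattain n hn)
      (hXmeas n) (hεmeas (n + 1))
      (hindep.indepFun_of_measurable_iSup_comap hεmeas (lt_add_one n) (hXpast n)) (hident _)
    simp only [u, this, ← hXs]
    ring
  obtain ⟨hVNmeas, C, hC⟩ := hVbdd N le_rfl
  have hterminal : Integrable (fun ω => V N (Xstar N ω)) μ :=
    integrable_of_abs_le (hVNmeas.comp (hXmeas N)) fun _ => hC _
  calc (∫ ω, (∑ n ∈ Finset.range N, f (Xstar n ω) (astar n (Xstar n ω))) + g (Xstar N ω) ∂μ)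
      = ∑ n ∈ Finset.range N, (u n - u (n + 1)) + u N := by
        simp_rw [← hVN]
        rw [integral_add (integrable_finsetSum _ fun n _ => hcost n) hterminal,
          integral_finsetSum _ fun n _ => hcost n]
        exact congrArg (· + u N) (Finset.sum_congr rfl fun n hn => hstep n (Finset.mem_range.mp hn))
    _ = u 0 := by rw [Finset.sum_range_sub']; ring
    _ = V 0 x0 := by simp [u, hX0]

/-- If measurable feedback maps `a_n*` attain the infimum in the DP recursion, then the
associated feedback control achieves the DP value: `J(α*) = V 0 x0`. -/
theorem stmt_3 {Ω Enoise : Type*} [MeasurableSpace Ω] [MeasurableSpace Enoise]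
    (μ : Measure Ω) [IsProbabilityMeasure μ]
    (d : ℕ) (A : Type*) [MeasurableSpace A] [TopologicalSpace A] [CompactSpace A] [Nonempty A]
    (ε : ℕ → Ω → Enoise) (hεmeas : ∀ n, Measurable (ε n))
    (ν : Measure Enoise) [IsProbabilityMeasure ν]
    (hident : ∀ n, μ.map (ε n) = ν)
    (hindep : ProbabilityTheory.iIndepFun ε μ)
    (F : EuclideanSpace ℝ (Fin d) → A → Enoise → EuclideanSpace ℝ (Fin d))
    (hFmeas : Measurable fun q : (EuclideanSpace ℝ (Fin d)) × A × Enoise => F q.1 q.2.1 q.2.2)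
    (f : EuclideanSpace ℝ (Fin d) → A → ℝ) (g : EuclideanSpace ℝ (Fin d) → ℝ)
    (hfmeas : Measurable fun q : (EuclideanSpace ℝ (Fin d)) × A => f q.1 q.2)
    (hgmeas : Measurable g)
    (Mf Mg : ℝ) (hfbdd : ∀ x a, |f x a| ≤ Mf) (hgbdd : ∀ x, |g x| ≤ Mg)
    (N : ℕ) (V : ℕ → EuclideanSpace ℝ (Fin d) → ℝ)
    (hVN : ∀ x, V N x = g x)
    (hV : ∀ n < N, ∀ x, V n x = ⨅ a : A, (f x a + ∫ e, V (n + 1) (F x a e) ∂ν))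
    (astar : ℕ → EuclideanSpace ℝ (Fin d) → A)
    (hastarmeas : ∀ n, Measurable (astar n))
    (hattain : ∀ n < N, ∀ x,
      V n x = f x (astar n x) + ∫ e, V (n + 1) (F x (astar n x) e) ∂ν)
    (x0 : EuclideanSpace ℝ (Fin d))
    (Xstar : ℕ → Ω → EuclideanSpace ℝ (Fin d))
    (hX0 : ∀ ω, Xstar 0 ω = x0)
    (hXs : ∀ n ω, Xstar (n + 1) ω = F (Xstar n ω) (astar n (Xstar n ω)) (ε (n + 1) ω)) :
    (∫ ω, (∑ n ∈ Finset.range N, f (Xstar n ω) (astar n (Xstar n ω))) + g (Xstar N ω) ∂μ)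
      = V 0 x0 :=
  stmt_3_general μ d A ε hεmeas ν hident hindep F hFmeas f g hfmeas hgmeas Mf Mg hfbdd hgbdd N V hVN
    astar hastarmeas hattain x0 Xstar hX0 hXs
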